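/- arXiv:2302.09796 — 4 statements merged into one kernel-verified Lean document; each statement's English description precedes it below -/
import Mathlib

section
/- Given S ∈ I, an element y ∈ S, and a set X ⊆ U \ S, there exists x ∈ X with (S \ {y}) ∪ {x} ∈ I if and only if rank((S \ {y}) ∪ X) ≥ |S|. -/
open Finset

/-- A matroid on a finite ground set `E`, given by its independence predicate. -/
structure FinMatroid (α : Type*) [DecidableEq α] where
  E : Finset α
  Indep : Finset α → Prop
  indep_subset_ground : ∀ ⦃S : Finset α⦄, Indep S → S ⊆ E
  indep_empty : Indep ∅
  indep_mono : ∀ ⦃S T : Finset α⦄, Indep S → T ⊆ S → Indep T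
  indep_exchange : ∀ ⦃S T : Finset α⦄, Indep S → Indep T → S.card < T.card →
    ∃ x ∈ T, x ∉ S ∧ Indep (insert x S)

variable {α : Type*} [DecidableEq α]

/-- The rank of a set `X`: the maximum cardinality of an independent subset of `X`. -/
noncomputable def FinMatroid.rank (M : FinMatroid α) (X : Finset α) : ℕ :=
  sSup {n : ℕ | ∃ S : Finset α, M.Indep S ∧ S ⊆ X ∧ S.card = n}

/-
The independent set `S.erase y` gains an element of `X` exactly when the rank of
`S.erase y ∪ X` exceeds `|S| - 1`: one direction is the definition of rank, the other is the
augmentation axiom applied to a maximum independent subset of `S.erase y ∪ X`, whose new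
element cannot come from `S.erase y`.
-/

namespace FinMatroid

variable (M : FinMatroid α)

lemma rank_bddAbove (X : Finset α) :
    BddAbove {n : ℕ | ∃ S : Finset α, M.Indep S ∧ S ⊆ X ∧ S.card = n} := by
  refine ⟨X.card, ?_⟩
  rintro _ ⟨T, -, hTX, rfl⟩
  exact card_le_card hTX

lemma card_le_rank_of_indep {T X : Finset α} (hT : M.Indep T) (hTX : T ⊆ X) :
    T.card ≤ M.rank X :=
  le_csSup (M.rank_bddAbove X) ⟨T, hT, hTX, rfl⟩

lemma exists_indep_subset_card_eq_rank (X : Finset α) :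
    ∃ T : Finset α, M.Indep T ∧ T ⊆ X ∧ T.card = M.rank X :=
  Nat.sSup_mem (s := {n : ℕ | ∃ S : Finset α, M.Indep S ∧ S ⊆ X ∧ S.card = n})
    ⟨0, ∅, M.indep_empty, empty_subset X, card_empty⟩ (M.rank_bddAbove X)

lemma exists_insert_indep_iff_card_lt_rank {I : Finset α} (hI : M.Indep I) (X : Finset α) :
    (∃ x ∈ X, x ∉ I ∧ M.Indep (insert x I)) ↔ I.card < M.rank (I ∪ X) := by
  constructor
  · rintro ⟨x, hxX, hxI, hind⟩
    have hsub : insert x I ⊆ I ∪ X := insert_subset (mem_union_right I hxX) subset_union_left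
    calc I.card < (insert x I).card := by rw [card_insert_of_notMem hxI]; exact Nat.lt_succ_self _
      _ ≤ M.rank (I ∪ X) := M.card_le_rank_of_indep hind hsub
  · intro hlt
    obtain ⟨T, hT, hTsub, hTcard⟩ := M.exists_indep_subset_card_eq_rank (I ∪ X)
    obtain ⟨x, hxT, hxI, hind⟩ := M.indep_exchange hI hT (hTcard ▸ hlt)
    have hxX : x ∈ X := (mem_union.mp (hTsub hxT)).resolve_left hxI
    exact ⟨x, hxX, hxI, hind⟩

end FinMatroid

/-- Co-circuit exchange: for `y ∈ S` and `X ⊆ U \ S`, there is `x ∈ X` with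
`(S \ {y}) ∪ {x}` independent iff `rank ((S \ {y}) ∪ X) ≥ |S|`. -/
theorem cocircuit_exchange (M : FinMatroid α) (S : Finset α) (hS : M.Indep S)
    (y : α) (hy : y ∈ S) (X : Finset α) (hX : X ⊆ M.E \ S) :
    (∃ x ∈ X, M.Indep (insert x (S.erase y))) ↔ S.card ≤ M.rank (S.erase y ∪ X) := by
  have hnotMem : ∀ x ∈ X, x ∉ S.erase y := fun x hx h =>
    (mem_sdiff.mp (hX hx)).2 (mem_of_mem_erase h)
  have hcard : (S.erase y).card + 1 = S.card := card_erase_add_one hy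
  rw [← hcard, Nat.add_one_le_iff,
    ← M.exists_insert_indep_iff_card_lt_rank (M.indep_mono hS (erase_subset y S))]
  exact exists_congr fun x => and_congr_right fun hx => (and_iff_right (hnotMem x hx)).symm
end

section
/- Let X and Y be subsets of the ground set of a matroid with injective weights such that every element of X has strictly smaller weight than every element of Y. If S_X is the min-weight basis of X and S_Y is the min-weight basis of Y, then the min-weight basis of S_X ∪ S_Y equals the min-weight basis of X ∪ Y. -/
/-!
With injective weights, an element `e ∈ Z` lies in the min-weight basis of `Z` exactly when it
is not spanned by the elements of `Z` lighter than `e`, i.e. adding `e` to them raises the rank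
(the min-weight basis meets every weight-downward-closed part of `Z` in a basis of that part, by
an exchange argument). Not being spanned passes from a set to its subsets, so the min-weight basis
`B₀` of `X ∪ Y` meets `X` and `Y` inside `S_X` and `S_Y`. Hence `B₀ ⊆ S_X ∪ S_Y ⊆ X ∪ Y`, so `B₀`
is also the min-weight basis of `S_X ∪ S_Y`, and uniqueness gives `B = B₀`.
-/

open Finset

variable {α : Type*} [DecidableEq α]

/-- `S` is a basis of `X`: an independent subset of `X` of size `rank X`. -/
def FinMatroid.IsBasisOf (M : FinMatroid α) (S X : Finset α) : Prop :=
  M.Indep S ∧ S ⊆ X ∧ S.card = M.rank X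

/-- `B` is the min-weight basis of `Z` with respect to the weights `w`. -/
def IsMinWeightBasis (M : FinMatroid α) (w : α → ℝ) (Z B : Finset α) : Prop :=
  M.IsBasisOf B Z ∧ ∀ B' : Finset α, M.IsBasisOf B' Z → ∑ x ∈ B, w x ≤ ∑ x ∈ B', w x

namespace FinMatroid

variable {M : FinMatroid α}

lemma bddAbove_card_indep_subset (M : FinMatroid α) (X : Finset α) :
    BddAbove {n : ℕ | ∃ S : Finset α, M.Indep S ∧ S ⊆ X ∧ S.card = n} :=
  ⟨X.card, by rintro _ ⟨S, -, hSX, rfl⟩; exact card_le_card hSX⟩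

lemma exists_isBasisOf (M : FinMatroid α) (X : Finset α) : ∃ S, M.IsBasisOf S X :=
  Nat.sSup_mem (s := {n | ∃ S, M.Indep S ∧ S ⊆ X ∧ S.card = n})
    ⟨0, ∅, M.indep_empty, empty_subset X, rfl⟩ (M.bddAbove_card_indep_subset X)

lemma card_le_rank {S X : Finset α} (hS : M.Indep S) (hSX : S ⊆ X) : S.card ≤ M.rank X :=
  le_csSup (M.bddAbove_card_indep_subset X) ⟨S, hS, hSX, rfl⟩

lemma rank_mono {X Y : Finset α} (h : X ⊆ Y) : M.rank X ≤ M.rank Y := by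
  obtain ⟨S, hS, hSX, hcard⟩ := M.exists_isBasisOf X
  exact hcard ▸ card_le_rank hS (hSX.trans h)

lemma exists_isBasisOf_superset {J X : Finset α} (hJ : M.Indep J) (hJX : J ⊆ X) :
    ∃ B, M.IsBasisOf B X ∧ J ⊆ B := by
  by_cases hJr : M.rank X ≤ J.card
  · exact ⟨J, ⟨hJ, hJX, le_antisymm (card_le_rank hJ hJX) hJr⟩, subset_rfl⟩
  obtain ⟨S, hS, hSX, hScard⟩ := M.exists_isBasisOf X
  obtain ⟨x, hxS, hxJ, hxJ'⟩ := M.indep_exchange hJ hS (by omega)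
  obtain ⟨B, hB, hJB⟩ := exists_isBasisOf_superset hxJ' (insert_subset (hSX hxS) hJX)
  exact ⟨B, hB, (subset_insert x J).trans hJB⟩
termination_by M.rank X - J.card
decreasing_by rw [card_insert_of_notMem hxJ]; omega

lemma IsBasisOf.rank_eq_of_subset {B Z Z' : Finset α} (hB : M.IsBasisOf B Z) (hBZ' : B ⊆ Z')
    (hZ'Z : Z' ⊆ Z) : M.rank Z' = M.rank Z :=
  le_antisymm (rank_mono hZ'Z) (hB.2.2 ▸ card_le_rank hB.1 hBZ')

lemma IsBasisOf.rank_lt_rank_insert_iff {I A : Finset α} (hI : M.IsBasisOf I A) (e : α) :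
    M.rank A < M.rank (insert e A) ↔ e ∉ I ∧ M.Indep (insert e I) := by
  obtain ⟨hIind, hIA, hIcard⟩ := hI
  constructor
  · intro hlt
    obtain ⟨K, ⟨hK, hKA, hKcard⟩, hIK⟩ :=
      exists_isBasisOf_superset hIind (hIA.trans (subset_insert e A))
    obtain ⟨k, hkK, hkI⟩ : ∃ k ∈ K, k ∉ I :=
      not_subset.1 fun hKI => by have := card_le_card hKI; omega
    have hkIind : M.Indep (insert k I) := M.indep_mono hK (insert_subset hkK hIK)
    obtain rfl : k = e := by
      by_contra hne
      have hkA : k ∈ A := (mem_insert.1 (hKA hkK)).resolve_left hne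
      have := card_le_rank hkIind (insert_subset hkA hIA)
      rw [card_insert_of_notMem hkI] at this
      omega
    exact ⟨hkI, hkIind⟩
  · rintro ⟨heI, hind⟩
    have := card_le_rank hind (insert_subset_insert e hIA)
    rw [card_insert_of_notMem heI] at this
    omega

lemma rank_lt_rank_insert_of_subset {A A' : Finset α} (hAA' : A ⊆ A') {e : α}
    (h : M.rank A' < M.rank (insert e A')) : M.rank A < M.rank (insert e A) := by
  obtain ⟨J, hJ⟩ := M.exists_isBasisOf A
  obtain ⟨I, hI, hJI⟩ := exists_isBasisOf_superset hJ.1 (hJ.2.1.trans hAA')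
  obtain ⟨heI, hind⟩ := (hI.rank_lt_rank_insert_iff e).1 h
  exact (hJ.rank_lt_rank_insert_iff e).2
    ⟨fun he => heI (hJI he), M.indep_mono hind (insert_subset_insert e hJI)⟩

end FinMatroid

open FinMatroid

lemma filter_le_eq_insert_filter_lt {ι β : Type*} [DecidableEq ι] [LinearOrder β] {w : ι → β}
    (hw : Function.Injective w) {S : Finset ι} {e : ι} (he : e ∈ S) :
    S.filter (w · ≤ w e) = insert e (S.filter (w · < w e)) := by
  ext a
  simp only [mem_filter, mem_insert, le_iff_lt_or_eq, hw.eq_iff]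
  aesop

lemma filter_le_eq_filter_lt {ι β : Type*} [LinearOrder β] {w : ι → β}
    (hw : Function.Injective w) {S : Finset ι} {e : ι} (he : e ∉ S) :
    S.filter (w · ≤ w e) = S.filter (w · < w e) := by
  refine filter_congr fun a ha => ⟨fun hle => hle.lt_of_ne fun h => ?_, le_of_lt⟩
  exact he (hw h ▸ ha)

lemma exists_isMinWeightBasis (M : FinMatroid α) (w : α → ℝ) (Z : Finset α) :
    ∃ B, IsMinWeightBasis M w Z B := by
  classical
  obtain ⟨S, hS⟩ := M.exists_isBasisOf Z
  obtain ⟨B, hBmem, hBmin⟩ := exists_min_image (Z.powerset.filter (M.IsBasisOf · Z))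
    (fun S => ∑ x ∈ S, w x) ⟨S, mem_filter.2 ⟨mem_powerset.2 hS.2.1, hS⟩⟩
  exact ⟨B, (mem_filter.1 hBmem).2,
    fun B' hB' => hBmin B' (mem_filter.2 ⟨mem_powerset.2 hB'.2.1, hB'⟩)⟩

namespace IsMinWeightBasis

variable {M : FinMatroid α} {w : α → ℝ} {Z B : Finset α}

lemma exists_le_of_indep_insert (hB : IsMinWeightBasis M w Z B) {I : Finset α} {x : α}
    (hxZ : x ∈ Z) (hxB : x ∉ B) (hIB : I ⊆ B) (hxI : M.Indep (insert x I)) :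
    ∃ y ∈ B, y ∉ I ∧ w y ≤ w x := by
  obtain ⟨hBbasis, hBmin⟩ := hB
  have ⟨_, hBZ, hBcard⟩ := hBbasis
  have hxBZ : insert x B ⊆ Z := insert_subset hxZ hBZ
  have hrank := hBbasis.rank_eq_of_subset (subset_insert x B) hxBZ
  obtain ⟨K, ⟨hK, hKxB, hKcard⟩, hIK⟩ :=
    exists_isBasisOf_superset hxI (insert_subset_insert x hIB)
  have hxK : x ∈ K := hIK (mem_insert_self x I)
  obtain ⟨y, hyB, hyK⟩ : ∃ y ∈ B, y ∉ K := not_subset.1 fun hBK => by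
    have := card_le_card (insert_subset hxK hBK)
    rw [card_insert_of_notMem hxB] at this
    omega
  have hxBy : x ∉ B.erase y := fun h => hxB (mem_of_mem_erase h)
  have hKeq : K = insert x (B.erase y) := by
    refine eq_of_subset_of_card_le (fun a ha => ?_) ?_
    · rcases mem_insert.1 (hKxB ha) with rfl | haB
      · exact mem_insert_self a _
      · exact mem_insert_of_mem (mem_erase.2 ⟨ne_of_mem_of_not_mem ha hyK, haB⟩)
    · rw [card_insert_of_notMem hxBy, card_erase_of_mem hyB]
      have := card_pos.2 ⟨y, hyB⟩
      omega
  have hwK := hBmin K ⟨hK, hKxB.trans hxBZ, hKcard.trans hrank⟩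
  rw [hKeq, sum_insert hxBy, ← add_sum_erase B w hyB] at hwK
  exact ⟨y, hyB, fun hyI => hyK (hIK (mem_insert_of_mem hyI)), by linarith⟩

lemma card_filter_eq_rank (hB : IsMinWeightBasis M w Z B) (p : α → Prop) [DecidablePred p]
    (hp : ∀ a b, w a ≤ w b → p b → p a) : (B.filter p).card = M.rank (Z.filter p) := by
  have hBp : M.Indep (B.filter p) := M.indep_mono hB.1.1 (filter_subset p B)
  refine le_antisymm (card_le_rank hBp (filter_subset_filter p hB.1.2.1)) (not_lt.1 fun hlt => ?_)
  obtain ⟨C, hC, hCZ, hCcard⟩ := M.exists_isBasisOf (Z.filter p)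
  obtain ⟨x, hxC, hxBp, hx⟩ := M.indep_exchange hBp hC (by omega)
  obtain ⟨hxZ, hpx⟩ := mem_filter.1 (hCZ hxC)
  obtain ⟨y, hyB, hyBp, hyx⟩ := hB.exists_le_of_indep_insert hxZ
    (fun hxB => hxBp (mem_filter.2 ⟨hxB, hpx⟩)) (filter_subset p B) hx
  exact hyBp (mem_filter.2 ⟨hyB, hp y x hyx hpx⟩)

lemma mem_iff (hw : Function.Injective w) (hB : IsMinWeightBasis M w Z B) {e : α} :
    e ∈ B ↔ e ∈ Z ∧ M.rank (Z.filter (w · < w e)) < M.rank (insert e (Z.filter (w · < w e))) := by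
  by_cases heZ : e ∈ Z
  swap
  · exact iff_of_false (fun heB => heZ (hB.1.2.1 heB)) (fun h => heZ h.1)
  have hlt := hB.card_filter_eq_rank (w · < w e) fun a b hab hb => hab.trans_lt hb
  have hle := hB.card_filter_eq_rank (w · ≤ w e) fun a b hab hb => hab.trans hb
  rw [filter_le_eq_insert_filter_lt hw heZ] at hle
  by_cases heB : e ∈ B
  · rw [filter_le_eq_insert_filter_lt hw heB, card_insert_of_notMem (by simp)] at hle
    simp only [heB, heZ, true_and, true_iff]
    omega
  · rw [filter_le_eq_filter_lt hw heB] at hle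
    simp only [heB, heZ, true_and, false_iff]
    omega

lemma unique (hw : Function.Injective w) {B' : Finset α} (hB : IsMinWeightBasis M w Z B)
    (hB' : IsMinWeightBasis M w Z B') : B = B' := by
  ext e
  rw [hB.mem_iff hw, hB'.mem_iff hw]

lemma inter_subset (hw : Function.Injective w) {Z' B' : Finset α} (hB : IsMinWeightBasis M w Z B)
    (hB' : IsMinWeightBasis M w Z' B') (hZ' : Z' ⊆ Z) : B ∩ Z' ⊆ B' := by
  intro e he
  obtain ⟨heB, heZ'⟩ := mem_inter.1 he
  exact (hB'.mem_iff hw).2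
    ⟨heZ', rank_lt_rank_insert_of_subset (filter_subset_filter _ hZ') ((hB.mem_iff hw).1 heB).2⟩

lemma isMinWeightBasis_subset {Z' : Finset α} (hB : IsMinWeightBasis M w Z B) (hBZ' : B ⊆ Z')
    (hZ'Z : Z' ⊆ Z) : IsMinWeightBasis M w Z' B := by
  have hrank := hB.1.rank_eq_of_subset hBZ' hZ'Z
  exact ⟨⟨hB.1.1, hBZ', hB.1.2.2.trans hrank.symm⟩,
    fun C hC => hB.2 C ⟨hC.1, hC.2.1.trans hZ'Z, hC.2.2.trans hrank⟩⟩

end IsMinWeightBasis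

theorem minweight_basis_sparsification_general (M : FinMatroid α) (w : α → ℝ)
    (hw : Function.Injective w)
    (X Y SX SY B : Finset α)
    (hSX : IsMinWeightBasis M w X SX) (hSY : IsMinWeightBasis M w Y SY)
    (hB : IsMinWeightBasis M w (SX ∪ SY) B) :
    IsMinWeightBasis M w (X ∪ Y) B := by
  obtain ⟨B₀, hB₀⟩ := exists_isMinWeightBasis M w (X ∪ Y)
  have hB₀S : B₀ ⊆ SX ∪ SY :=
    calc B₀ = B₀ ∩ X ∪ B₀ ∩ Y := by rw [← inter_union_distrib_left, inter_eq_left.2 hB₀.1.2.1]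
      _ ⊆ SX ∪ SY := union_subset_union (hB₀.inter_subset hw hSX subset_union_left)
          (hB₀.inter_subset hw hSY subset_union_right)
  have hSXY : SX ∪ SY ⊆ X ∪ Y := union_subset_union hSX.1.2.1 hSY.1.2.1
  rwa [hB.unique hw (hB₀.isMinWeightBasis_subset hB₀S hSXY)]

/-- Sparsification: if all weights in `X` are smaller than those in `Y`, then
the min-weight basis of `SX ∪ SY` (where `SX`, `SY` are the min-weight bases of
`X`, `Y`) is also the min-weight basis of `X ∪ Y`. -/
theorem minweight_basis_sparsification (M : FinMatroid α) (w : α → ℝ)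
    (hw : Function.Injective w)
    (X Y SX SY B : Finset α) (hX : X ⊆ M.E) (hY : Y ⊆ M.E)
    (hXY : ∀ x ∈ X, ∀ y ∈ Y, w x < w y)
    (hSX : IsMinWeightBasis M w X SX) (hSY : IsMinWeightBasis M w Y SY)
    (hB : IsMinWeightBasis M w (SX ∪ SY) B) :
    IsMinWeightBasis M w (X ∪ Y) B :=
  minweight_basis_sparsification_general M w hw X Y SX SY B hSX hSY hB
end

section
/- Let S be a common independent set of two matroids M₁, M₂ on ground set U. If P is a shortest (s,t)-path in the exchange graph G(S), then S' := S ⊕ (V(P) \ {s,t}) is a common independent set of size |S| + 1. Conversely, if t is unreachable from s in G(S), then S is a maximum-cardinality common independent set. -/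
/-!
Write a shortest augmenting path as `y₀ x₁ y₁ … xₖ yₖ`. In `M₁` every `S - xᵢ + yᵢ` is
independent, while `S - xᵢ + yⱼ` for `i < j` and `S + yⱼ` for `j ≥ 1` are dependent, since
otherwise the path would have a shortcut. So the pairs `(xᵢ, yᵢ)` form a triangular system of
exchanges for the independent set `S + y₀`, and the augmentation axiom shows, pair by pair, that
carrying them out keeps the set independent. Reversing the path swaps the roles of `M₁` and `M₂`.

If `t` is unreachable, let `R` be the set of vertices reachable from `s`. No element of `T ∩ R`
extends `S ∩ R` in `M₂`, and no element of `T \ R` extends `S \ R` in `M₁`: either would give an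
edge leaving `R` or an edge into `t`. Hence `|T| ≤ |S ∩ R| + |S \ R| = |S|`.
-/

open Finset

variable {α : Type*} [DecidableEq α]

/-- Exchange-graph edges between ground-set elements, for a common independent set `S`. -/
def ExchangeEdge (M1 M2 : FinMatroid α) (S : Finset α) (u v : α) : Prop :=
  (u ∈ S ∧ v ∉ S ∧ M1.Indep (insert v (S.erase u))) ∨
  (u ∉ S ∧ v ∈ S ∧ M2.Indep (insert u (S.erase v)))

/-- An augmenting path in the exchange graph `G(S)`, recorded by its list of
interior vertices (the endpoints `s`, `t` are implicit). -/
def IsAugPath (M1 M2 : FinMatroid α) (S : Finset α) (p : List α) : Prop :=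
  ∃ h : p ≠ [],
    p.Nodup ∧ (∀ a ∈ p, a ∈ M1.E) ∧
    p.head h ∉ S ∧ M1.Indep (insert (p.head h) S) ∧
    p.getLast h ∉ S ∧ M2.Indep (insert (p.getLast h) S) ∧
    p.Chain' (ExchangeEdge M1 M2 S)

namespace FinMatroid

variable {M : FinMatroid α} {S B C : Finset α}

theorem card_le_of_forall_not_indep_insert (hB : M.Indep B) (hC : M.Indep C)
    (h : ∀ z ∈ C, z ∉ B → ¬ M.Indep (insert z B)) : C.card ≤ B.card := by
  by_contra! hlt
  obtain ⟨z, hzC, hzB, hz⟩ := M.indep_exchange hB hC hlt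
  exact h z hzC hzB hz

theorem indep_insert_of_forall_indep_insert_eq {w : α} (hB : M.Indep B) (hC : M.Indep C)
    (hlt : B.card < C.card) (h : ∀ z ∈ C, z ∉ B → M.Indep (insert z B) → z = w) :
    M.Indep (insert w B) := by
  obtain ⟨z, hzC, hzB, hz⟩ := M.indep_exchange hB hC hlt
  rwa [← h z hzC hzB hz]

theorem exists_indep_superset_card_eq (hB : M.Indep B) (hS : M.Indep S) {k : ℕ}
    (hBk : B.card ≤ k) (hkS : k ≤ S.card) :
    ∃ B', B ⊆ B' ∧ B' ⊆ B ∪ S ∧ M.Indep B' ∧ B'.card = k := by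
  induction k, hBk using Nat.le_induction with
  | base => exact ⟨B, subset_rfl, subset_union_left, hB, rfl⟩
  | succ k _ ih =>
    obtain ⟨B', hBB', hB'BS, hB', rfl⟩ := ih (by omega)
    obtain ⟨z, hzS, hzB', hz⟩ := M.indep_exchange hB' hS (by omega)
    exact ⟨insert z B', hBB'.trans (subset_insert _ _),
      insert_subset (mem_union_right _ hzS) hB'BS, hz, card_insert_of_notMem hzB'⟩

theorem exists_indep_insert_erase {A : Finset α} {y : α} (hS : M.Indep S) (hAS : A ⊆ S)
    (hy : y ∉ S) (hyA : M.Indep (insert y A)) (hyS : ¬ M.Indep (insert y S)) :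
    ∃ x ∈ S, x ∉ A ∧ M.Indep (insert y (S.erase x)) := by
  have hAS' : A.card < S.card :=
    card_lt_card (ssubset_of_subset_of_ne hAS (by rintro rfl; exact hyS hyA))
  obtain ⟨B, hyAB, hB, hBind, hBcard⟩ := exists_indep_superset_card_eq hyA hS
    (by rw [card_insert_of_notMem fun h => hy (hAS h)]; omega) le_rfl
  have hByS : B ⊆ insert y S :=
    hB.trans (union_subset (insert_subset_insert _ hAS) (subset_insert _ _))
  obtain ⟨x, hx, hxB⟩ : ∃ x ∈ insert y S, x ∉ B := by
    by_contra! h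
    have := card_le_card h
    rw [card_insert_of_notMem hy] at this
    omega
  have hxy : x ≠ y := fun h => hxB (h ▸ hyAB (mem_insert_self _ _))
  have hB_eq : B = insert y (S.erase x) := by
    rw [← erase_insert_of_ne hxy.symm]
    refine eq_of_subset_of_card_le (fun b hb => mem_erase.2 ⟨?_, hByS hb⟩) ?_
    · rintro rfl
      exact hxB hb
    · rw [card_erase_of_mem hx, card_insert_of_notMem hy]
      omega
  exact ⟨x, (mem_insert.1 hx).resolve_left hxy, fun h => hxB (hyAB (mem_insert_of_mem h)),
    hB_eq ▸ hBind⟩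

theorem indep_insert_erase_insert {x y v : α} (hx : x ∈ S) (hy : y ∉ S) (hv : v ∉ S)
    (hyS : M.Indep (insert y S)) (hvx : M.Indep (insert v (S.erase x)))
    (hvS : ¬ M.Indep (insert v S)) :
    M.Indep (insert v ((insert y S).erase x)) := by
  have hyx : y ≠ x := fun h => hy (h ▸ hx)
  rw [erase_insert_of_ne hyx, insert_comm]
  refine indep_insert_of_forall_indep_insert_eq hvx hyS ?_ fun z hz hzB hzI => ?_
  · rw [card_insert_of_notMem hy, card_insert_of_notMem fun h => hv (mem_of_mem_erase h),
      card_erase_of_mem hx]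
    have := card_pos.2 ⟨x, hx⟩
    omega
  · refine (mem_insert.1 hz).resolve_right fun hzS => hvS ?_
    obtain rfl : z = x := by
      by_contra hzx
      exact hzB (mem_insert_of_mem (mem_erase.2 ⟨hzx, hzS⟩))
    rwa [insert_comm, insert_erase hzS] at hzI

theorem indep_insert_erase_insert_erase {a b u v : α} (hab : a ≠ b) (ha : a ∈ S) (hb : b ∈ S)
    (hu : u ∉ S) (hv : v ∉ S) (hva : M.Indep (insert v (S.erase a)))
    (hub : M.Indep (insert u (S.erase b))) (hua : ¬ M.Indep (insert u (S.erase a))) :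
    M.Indep (insert u ((insert v (S.erase a)).erase b)) := by
  have hvb : v ≠ b := fun h => hv (h ▸ hb)
  have hba : b ∈ S.erase a := mem_erase.2 ⟨hab.symm, hb⟩
  rw [erase_insert_of_ne hvb, insert_comm]
  refine indep_insert_of_forall_indep_insert_eq
    (M.indep_mono hub (insert_subset_insert _ (erase_subset_erase _ (erase_subset _ _))))
    hva ?_ fun z hz hzB hzI => ?_
  · rw [card_insert_of_notMem fun h => hu (mem_of_mem_erase (mem_of_mem_erase h)),
      card_erase_of_mem hba, card_insert_of_notMem fun h => hv (mem_of_mem_erase h),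
      card_erase_of_mem ha]
    have := one_lt_card.2 ⟨a, ha, b, hb, hab⟩
    omega
  · refine (mem_insert.1 hz).resolve_right fun hzS => hua ?_
    obtain rfl : z = b := by
      by_contra hzb
      exact hzB (mem_insert_of_mem (mem_erase.2 ⟨hzb, hzS⟩))
    rwa [insert_comm, insert_erase hba] at hzI

theorem not_indep_insert_erase_erase {a b u : α} (hS : M.Indep S) (hab : a ≠ b) (ha : a ∈ S)
    (hb : b ∈ S) (hu : u ∉ S) (hua : ¬ M.Indep (insert u (S.erase a)))
    (hub : ¬ M.Indep (insert u (S.erase b))) :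
    ¬ M.Indep (insert u ((S.erase a).erase b)) := by
  have hba : b ∈ S.erase a := mem_erase.2 ⟨hab.symm, hb⟩
  intro hB
  have hcard := card_le_of_forall_not_indep_insert hB hS fun z hzS hzB hzI => ?_
  · rw [card_insert_of_notMem fun h => hu (mem_of_mem_erase (mem_of_mem_erase h)),
      card_erase_of_mem hba, card_erase_of_mem ha] at hcard
    have := one_lt_card.2 ⟨a, ha, b, hb, hab⟩
    omega
  · by_cases hza : z = a
    · subst hza
      rw [insert_comm, erase_right_comm, insert_erase (mem_erase.2 ⟨hab, hzS⟩)] at hzI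
      exact hub hzI
    · obtain rfl : z = b := by
        by_contra hzb
        exact hzB (mem_insert_of_mem (mem_erase.2 ⟨hzb, mem_erase.2 ⟨hza, hzS⟩⟩))
      rw [insert_comm, insert_erase hba] at hzI
      exact hua hzI

end FinMatroid

def swapPairs (S : Finset α) (L : List (α × α)) : Finset α :=
  S \ (L.map Prod.fst).toFinset ∪ (L.map Prod.snd).toFinset

theorem swapPairs_cons {S : Finset α} {e : α × α} {L : List (α × α)} (he : e.2 ∉ S)
    (hL : ∀ f ∈ L, f.1 ∈ S) :
    swapPairs S (e :: L) = swapPairs (insert e.2 (S.erase e.1)) L := by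
  ext a
  simp only [swapPairs, mem_union, mem_sdiff, mem_insert, mem_erase, List.mem_toFinset,
    List.map_cons, List.mem_cons, List.mem_map]
  grind

namespace FinMatroid

variable {M : FinMatroid α}

def TriangularExchanges (M : FinMatroid α) (S : Finset α) (L : List (α × α)) : Prop :=
  (∀ e ∈ L, e.1 ∈ S ∧ e.2 ∉ S ∧ M.Indep (insert e.2 (S.erase e.1))) ∧
    L.Pairwise fun e f => ¬ M.Indep (insert f.2 (S.erase e.1))

theorem TriangularExchanges.tail {S : Finset α} {e : α × α} {L : List (α × α)}
    (hS : M.Indep S) (h : M.TriangularExchanges S (e :: L)) :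
    M.TriangularExchanges (insert e.2 (S.erase e.1)) L := by
  obtain ⟨hL, hpw⟩ := h
  obtain ⟨he1, he2, heI⟩ := hL e List.mem_cons_self
  replace hL : ∀ f ∈ L, f.1 ∈ S ∧ f.2 ∉ S ∧ M.Indep (insert f.2 (S.erase f.1)) :=
    fun f hf => hL f (List.mem_cons_of_mem _ hf)
  rw [List.pairwise_cons] at hpw
  -- a repeated `x` or `y` would make one exchange both independent and dependent
  have hne : ∀ f ∈ L, f.1 ≠ e.1 ∧ f.2 ≠ e.2 := fun f hf =>
    ⟨fun h => hpw.1 f hf (h ▸ (hL f hf).2.2), fun h => hpw.1 f hf (h ▸ heI)⟩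
  refine ⟨fun f hf => ⟨mem_insert_of_mem (mem_erase.2 ⟨(hne f hf).1, (hL f hf).1⟩), ?_,
    indep_insert_erase_insert_erase (hne f hf).1.symm he1 (hL f hf).1 (hL f hf).2.1 he2 heI
      (hL f hf).2.2 (hpw.1 f hf)⟩, hpw.2.imp_of_mem fun {f g} hf hg hfg hI => ?_⟩
  · rw [mem_insert, mem_erase, not_or, not_and_or, not_not]
    exact ⟨(hne f hf).2, Or.inr (hL f hf).2.1⟩
  · refine not_indep_insert_erase_erase hS (hne f hf).1.symm he1 (hL f hf).1 (hL g hg).2.1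
      (hpw.1 g hg) hfg (M.indep_mono hI ?_)
    have hef : e.2 ≠ f.1 := fun h => he2 (h ▸ (hL f hf).1)
    rw [erase_insert_of_ne hef]
    exact insert_subset_insert _ (subset_insert _ _)

theorem TriangularExchanges.insert {S : Finset α} {L : List (α × α)} {y : α}
    (h : M.TriangularExchanges S L) (hy : y ∉ S) (hyI : M.Indep (insert y S))
    (hdep : ∀ f ∈ L, ¬ M.Indep (insert f.2 S)) :
    M.TriangularExchanges (insert y S) L := by
  refine ⟨fun e he => ?_, h.2.imp fun hef hI => hef (M.indep_mono hI ?_)⟩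
  · obtain ⟨he1, he2, heI⟩ := h.1 e he
    refine ⟨mem_insert_of_mem he1, ?_, indep_insert_erase_insert he1 hy he2 hyI heI (hdep e he)⟩
    rw [mem_insert, not_or]
    exact ⟨fun h => hdep e he (h ▸ hyI), he2⟩
  · exact insert_subset_insert _ (erase_subset_erase _ (subset_insert _ _))

theorem TriangularExchanges.indep_swapPairs : ∀ {S : Finset α} {L : List (α × α)},
    M.Indep S → M.TriangularExchanges S L →
    M.Indep (swapPairs S L) ∧ (swapPairs S L).card = S.card
  | S, [], hS, _ => by simpa [swapPairs] using hS
  | S, e :: L, hS, h => by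
    obtain ⟨he1, he2, heI⟩ := h.1 e List.mem_cons_self
    rw [swapPairs_cons he2 fun f hf => (h.1 f (List.mem_cons_of_mem _ hf)).1]
    obtain ⟨hI, hcard⟩ := (h.tail hS).indep_swapPairs heI
    refine ⟨hI, hcard.trans ?_⟩
    rw [card_insert_of_notMem fun h => he2 (mem_of_mem_erase h), card_erase_of_mem he1]
    have := card_pos.2 ⟨e.1, he1⟩
    omega

end FinMatroid

section FlattenPairs

variable {β : Type*}

def flattenPairs (L : List (β × β)) : List β :=
  L.flatMap fun e => [e.1, e.2]

@[simp] theorem flattenPairs_nil : flattenPairs ([] : List (β × β)) = [] := rfl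

@[simp] theorem flattenPairs_cons (e : β × β) (L : List (β × β)) :
    flattenPairs (e :: L) = e.1 :: e.2 :: flattenPairs L := rfl

@[simp] theorem flattenPairs_append (L L' : List (β × β)) :
    flattenPairs (L ++ L') = flattenPairs L ++ flattenPairs L' :=
  List.flatMap_append

@[simp] theorem length_flattenPairs (L : List (β × β)) :
    (flattenPairs L).length = 2 * L.length := by
  induction L with
  | nil => rfl
  | cons e L ih => simp only [flattenPairs_cons, List.length_cons, ih]; ring

end FlattenPairs

theorem symmDiff_cons_flattenPairs {S : Finset α} {y : α} {L : List (α × α)} (hy : y ∉ S)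
    (hL : ∀ e ∈ L, e.1 ∈ S ∧ e.2 ∉ S) :
    symmDiff S (y :: flattenPairs L).toFinset = swapPairs (insert y S) L := by
  ext a
  simp only [mem_symmDiff, swapPairs, mem_union, mem_sdiff, mem_insert, List.mem_toFinset,
    List.mem_cons, List.mem_map, flattenPairs, List.mem_flatMap]
  grind

theorem Relation.ReflTransGen.exists_nodup_isChain_cons {β : Type*} {r : β → β → Prop} {a b : β}
    (h : Relation.ReflTransGen r a b) :
    ∃ l, (a :: l).IsChain r ∧ (a :: l).getLast (List.cons_ne_nil a l) = b ∧ (a :: l).Nodup := by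
  induction h using Relation.ReflTransGen.head_induction_on with
  | refl => exact ⟨[], .singleton _, rfl, List.nodup_singleton _⟩
  | @head a c hac _ ih =>
    obtain ⟨l, hch, hlast, hnd⟩ := ih
    by_cases ha : a ∈ c :: l
    · obtain ⟨A, C, hAC⟩ := List.append_of_mem ha
      rw [hAC] at hch hnd
      simp only [hAC] at hlast
      exact ⟨C, hch.right_of_append, by simpa using hlast,
        hnd.sublist (List.sublist_append_right A _)⟩
    · exact ⟨c :: l, hch.cons_cons hac, by simpa using hlast, List.nodup_cons.2 ⟨ha, hnd⟩⟩

section ExchangeGraph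

variable {M1 M2 : FinMatroid α} {S : Finset α}

theorem ExchangeEdge.swap {u v : α} (h : ExchangeEdge M1 M2 S u v) : ExchangeEdge M2 M1 S v u :=
  h.symm.imp (fun h => ⟨h.2.1, h.1, h.2.2⟩) fun h => ⟨h.2.1, h.1, h.2.2⟩

theorem ExchangeEdge.mem_ground (hS : M1.Indep S) {u v : α} (h : ExchangeEdge M1 M2 S u v) :
    v ∈ M1.E :=
  h.elim (fun h => M1.indep_subset_ground h.2.2 (mem_insert_self _ _))
    fun h => M1.indep_subset_ground hS h.2.1

theorem exists_eq_flattenPairs_of_isChain : ∀ {y : α} {l : List α}, y ∉ S →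
    (y :: l).IsChain (ExchangeEdge M1 M2 S) → (y :: l).getLast (List.cons_ne_nil y l) ∉ S →
    ∃ L, l = flattenPairs L ∧ ∀ e ∈ L, e.1 ∈ S ∧ e.2 ∉ S ∧ M1.Indep (insert e.2 (S.erase e.1))
  | _, [], _, _, _ => ⟨[], rfl, by simp⟩
  | y, [x], hy, hc, hlast => by
    rcases List.isChain_pair.1 hc with h | h
    · exact absurd h.1 hy
    · exact absurd h.2.1 hlast
  | y, x :: y' :: l, hy, hc, hlast => by
    rw [List.isChain_cons_cons, List.isChain_cons_cons] at hc
    obtain ⟨hyx, hxy', hc'⟩ := hc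
    have hx : x ∈ S := hyx.elim (fun h => absurd h.1 hy) fun h => h.2.1
    obtain ⟨-, hy', hI⟩ : x ∈ S ∧ y' ∉ S ∧ M1.Indep (insert y' (S.erase x)) :=
      hxy'.resolve_right fun h => h.1 hx
    obtain ⟨L, rfl, hL⟩ := exists_eq_flattenPairs_of_isChain hy' hc' (by simpa using hlast)
    exact ⟨(x, y') :: L, rfl, by simpa [hx, hy', hI] using hL⟩

theorem IsAugPath.shortcut {a m c : List α} {u v : α}
    (hp : IsAugPath M1 M2 S (a ++ u :: m ++ v :: c)) (huv : ExchangeEdge M1 M2 S u v) :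
    IsAugPath M1 M2 S (a ++ u :: v :: c) := by
  obtain ⟨hne, hnd, hE, hh, hhI, hl, hlI, hch⟩ := hp
  have hsub : (a ++ u :: v :: c).Sublist (a ++ u :: m ++ v :: c) := by simp
  have hhead : (a ++ u :: v :: c).head (by simp) = (a ++ u :: m ++ v :: c).head hne := by
    cases a <;> simp
  have hlast : (a ++ u :: v :: c).getLast (by simp) = (a ++ u :: m ++ v :: c).getLast hne := by
    simp
  refine ⟨by simp, hsub.nodup hnd, fun x hx => hE x (hsub.subset hx), hhead ▸ hh, hhead ▸ hhI,
    hlast ▸ hl, hlast ▸ hlI, ?_⟩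
  rw [show a ++ u :: m ++ v :: c = (a ++ [u]) ++ (m ++ v :: c) by simp] at hch
  rw [show a ++ u :: v :: c = (a ++ [u]) ++ v :: c by simp]
  exact List.isChain_append.2
    ⟨hch.left_of_append, hch.right_of_append.right_of_append, by simpa using huv⟩

theorem IsAugPath.of_append_cons {a c : List α} {v : α} (hp : IsAugPath M1 M2 S (a ++ v :: c))
    (hv : v ∉ S) (hvI : M1.Indep (insert v S)) : IsAugPath M1 M2 S (v :: c) := by
  obtain ⟨hne, hnd, hE, -, -, hl, hlI, hch⟩ := hp
  have hlast : (v :: c).getLast (by simp) = (a ++ v :: c).getLast hne := by simp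
  exact ⟨by simp, hnd.sublist (List.sublist_append_right a _),
    fun x hx => hE x (List.mem_append_right a hx), hv, hvI, hlast ▸ hl, hlast ▸ hlI,
    hch.right_of_append⟩

theorem IsAugPath.reverse (hE : M1.E = M2.E) {p : List α} (hp : IsAugPath M1 M2 S p) :
    IsAugPath M2 M1 S p.reverse := by
  obtain ⟨hne, hnd, hEp, hh, hhI, hl, hlI, hch⟩ := hp
  refine ⟨by simpa using hne, List.nodup_reverse.2 hnd,
    fun a ha => hE ▸ hEp a (List.mem_reverse.1 ha), ?_, ?_, ?_, ?_,
    List.isChain_reverse.2 (hch.imp fun _ _ h => h.swap)⟩ <;>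
  simpa

def IsShortestAugPath (M1 M2 : FinMatroid α) (S : Finset α) (p : List α) : Prop :=
  IsAugPath M1 M2 S p ∧ ∀ q, IsAugPath M1 M2 S q → p.length ≤ q.length

theorem IsShortestAugPath.reverse (hE : M1.E = M2.E) {p : List α}
    (hp : IsShortestAugPath M1 M2 S p) : IsShortestAugPath M2 M1 S p.reverse :=
  ⟨hp.1.reverse hE, fun q hq => by simpa using hp.2 q.reverse (hq.reverse hE.symm)⟩

theorem IsShortestAugPath.not_indep_insert {y : α} {L : List (α × α)}
    (hp : IsShortestAugPath M1 M2 S (y :: flattenPairs L)) (hL : ∀ e ∈ L, e.2 ∉ S) :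
    ∀ f ∈ L, ¬ M1.Indep (insert f.2 S) := by
  intro f hf hfI
  obtain ⟨A, B, rfl⟩ := List.append_of_mem hf
  have hsplit : y :: flattenPairs (A ++ f :: B) =
      (y :: flattenPairs A ++ [f.1]) ++ f.2 :: flattenPairs B := by
    simp
  have hlen := hp.2 _ ((hsplit ▸ hp.1).of_append_cons (hL f hf) hfI)
  simp only [flattenPairs_append, flattenPairs_cons, List.length_cons, List.length_append,
    length_flattenPairs] at hlen
  omega

theorem IsShortestAugPath.triangularExchanges {y : α} {L : List (α × α)}
    (hp : IsShortestAugPath M1 M2 S (y :: flattenPairs L))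
    (hL : ∀ e ∈ L, e.1 ∈ S ∧ e.2 ∉ S ∧ M1.Indep (insert e.2 (S.erase e.1))) :
    M1.TriangularExchanges S L := by
  refine ⟨hL, List.pairwise_iff_forall_sublist.2 fun {e f} hef hI => ?_⟩
  obtain ⟨r₁, r₂, rfl, he, hf⟩ := List.cons_sublist_iff.1 hef
  obtain ⟨A, B, rfl⟩ := List.append_of_mem he
  obtain ⟨C, D, rfl⟩ := List.append_of_mem (List.singleton_sublist.1 hf)
  have hsplit : y :: flattenPairs (A ++ e :: B ++ (C ++ f :: D)) =
      (y :: flattenPairs A) ++ e.1 :: (e.2 :: flattenPairs (B ++ C) ++ [f.1]) ++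
        f.2 :: flattenPairs D := by
    simp
  have hlen := hp.2 _ ((hsplit ▸ hp.1).shortcut
    (Or.inl ⟨(hL e (by simp)).1, (hL f (by simp)).2.1, hI⟩))
  simp only [flattenPairs_append, flattenPairs_cons, List.length_cons, List.length_append,
    length_flattenPairs] at hlen
  omega

theorem IsShortestAugPath.indep_symmDiff {p : List α} (hp : IsShortestAugPath M1 M2 S p) :
    M1.Indep (symmDiff S p.toFinset) ∧ (symmDiff S p.toFinset).card = S.card + 1 := by
  obtain ⟨hne, -, -, hh, hhI, hl, -, hch⟩ := hp.1
  obtain ⟨y, l, rfl⟩ := List.exists_cons_of_ne_nil hne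
  simp only [List.head_cons] at hh hhI
  obtain ⟨L, rfl, hL⟩ := exists_eq_flattenPairs_of_isChain hh hch hl
  have hT := (hp.triangularExchanges hL).insert hh hhI
    (hp.not_indep_insert fun e he => (hL e he).2.1)
  obtain ⟨hI, hcard⟩ := hT.indep_swapPairs hhI
  rw [symmDiff_cons_flattenPairs hh fun e he => ⟨(hL e he).1, (hL e he).2.1⟩]
  exact ⟨hI, by rw [hcard, card_insert_of_notMem hh]⟩

def ExchangeReachable (M1 M2 : FinMatroid α) (S : Finset α) (v : α) : Prop :=
  ∃ u, u ∉ S ∧ M1.Indep (insert u S) ∧ Relation.ReflTransGen (ExchangeEdge M1 M2 S) u v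

theorem ExchangeReachable.of_indep_insert {v : α} (hv : v ∉ S) (hvI : M1.Indep (insert v S)) :
    ExchangeReachable M1 M2 S v :=
  ⟨v, hv, hvI, .refl⟩

theorem ExchangeReachable.step {u v : α} (hu : ExchangeReachable M1 M2 S u)
    (huv : ExchangeEdge M1 M2 S u v) : ExchangeReachable M1 M2 S v :=
  let ⟨w, hw, hwI, hwu⟩ := hu
  ⟨w, hw, hwI, hwu.tail huv⟩

theorem ExchangeReachable.exists_isAugPath (hS : M1.Indep S) {v : α}
    (hv : ExchangeReachable M1 M2 S v) (hvS : v ∉ S) (hvI : M2.Indep (insert v S)) :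
    ∃ p, IsAugPath M1 M2 S p := by
  obtain ⟨u, hu, huI, huv⟩ := hv
  obtain ⟨l, hch, rfl, hnd⟩ := huv.exists_nodup_isChain_cons
  exact ⟨u :: l, List.cons_ne_nil _ _, hnd,
    hch.induction _ _ (fun _ _ h _ => h.mem_ground hS)
      fun _ => M1.indep_subset_ground huI (mem_insert_self _ _),
    hu, huI, hvS, hvI, hch⟩

theorem card_le_of_not_exists_isAugPath (hS1 : M1.Indep S) (hS2 : M2.Indep S)
    (hno : ¬ ∃ p, IsAugPath M1 M2 S p) {T : Finset α} (hT1 : M1.Indep T) (hT2 : M2.Indep T) :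
    T.card ≤ S.card := by
  classical
  set R := ExchangeReachable M1 M2 S
  have hR : (T.filter R).card ≤ (S.filter R).card := by
    refine M2.card_le_of_forall_not_indep_insert (M2.indep_mono hS2 (filter_subset _ _))
      (M2.indep_mono hT2 (filter_subset _ _)) fun y hy hyS hyI => ?_
    obtain ⟨-, hyR⟩ := mem_filter.1 hy
    have hyS' : y ∉ S := fun h => hyS (mem_filter.2 ⟨h, hyR⟩)
    obtain ⟨x, hxS, hxR, hxI⟩ := M2.exists_indep_insert_erase hS2 (filter_subset _ _) hyS' hyI
      fun hI => hno (hyR.exists_isAugPath hS1 hyS' hI)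
    exact hxR (mem_filter.2 ⟨hxS, hyR.step (Or.inr ⟨hyS', hxS, hxI⟩)⟩)
  have hnR : (T.filter (¬ R ·)).card ≤ (S.filter (¬ R ·)).card := by
    refine M1.card_le_of_forall_not_indep_insert (M1.indep_mono hS1 (filter_subset _ _))
      (M1.indep_mono hT1 (filter_subset _ _)) fun y hy hyS hyI => ?_
    obtain ⟨-, hyR⟩ := mem_filter.1 hy
    have hyS' : y ∉ S := fun h => hyS (mem_filter.2 ⟨h, hyR⟩)
    obtain ⟨x, hxS, hxR, hxI⟩ := M1.exists_indep_insert_erase hS1 (filter_subset _ _) hyS' hyI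
      fun hI => hyR (.of_indep_insert hyS' hI)
    have hxR : R x := by simpa [hxS] using hxR
    exact hyR (hxR.step (Or.inl ⟨hxS, hyS', hxI⟩))
  have hT := card_filter_add_card_filter_not (s := T) R
  have hS := card_filter_add_card_filter_not (s := S) R
  omega

end ExchangeGraph

/-- Augmenting along a shortest augmenting path gives a common independent set
of size `|S| + 1`; if no augmenting path exists, `S` is maximum. -/
theorem augmenting_path_theorem (M1 M2 : FinMatroid α) (hE : M1.E = M2.E)
    (S : Finset α) (hS1 : M1.Indep S) (hS2 : M2.Indep S) :
    (∀ p : List α, IsAugPath M1 M2 S p →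
        (∀ q : List α, IsAugPath M1 M2 S q → p.length ≤ q.length) →
        M1.Indep (symmDiff S p.toFinset) ∧ M2.Indep (symmDiff S p.toFinset) ∧
          (symmDiff S p.toFinset).card = S.card + 1) ∧
    ((¬ ∃ p : List α, IsAugPath M1 M2 S p) →
        ∀ T : Finset α, M1.Indep T → M2.Indep T → T.card ≤ S.card) := by
  refine ⟨fun p hp hmin => ?_, fun hno T => card_le_of_not_exists_isAugPath hS1 hS2 hno⟩
  have hshort : IsShortestAugPath M1 M2 S p := ⟨hp, hmin⟩
  obtain ⟨hI1, hcard⟩ := hshort.indep_symmDiff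
  have hI2 := (hshort.reverse hE).indep_symmDiff.1
  rw [List.toFinset_reverse] at hI2
  exact ⟨hI1, hI2, hcard⟩
end

section
/- Let S ∈ I₁ ∩ I₂ with d_{G(S)}(s,t) = d_t and distance layers L₁, …, L_{d_t−1}, and let Π = (D₁, …, D_{d_t−1}) be an augmenting set in G(S). Then S ⊕ D₁ ⊕ ⋯ ⊕ D_{d_t−1} is a common independent set of M₁ and M₂. -/
open Finset

variable {α : Type*} [DecidableEq α]

/-- A walk in `G(S)` starting at (a neighbor of) the source `s`, recorded by its
list of ground-set vertices. -/
def PathTo (M1 M2 : FinMatroid α) (S : Finset α) (p : List α) : Prop :=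
  ∃ h : p ≠ [], p.head h ∉ S ∧ M1.Indep (insert (p.head h) S) ∧
    p.Chain' (ExchangeEdge M1 M2 S)

/-- `u` lies in the distance layer `L_l` of `G(S)`, i.e. `d(s,u) = l`. -/
def InLayer (M1 M2 : FinMatroid α) (S : Finset α) (u : α) (l : ℕ) : Prop :=
  (∃ p : List α, PathTo M1 M2 S p ∧ p.getLast? = some u ∧ p.length = l) ∧
  (∀ p : List α, PathTo M1 M2 S p → p.getLast? = some u → l ≤ p.length)

/-- The interior of an `(s,t)`-walk in `G(S)` (not necessarily simple). -/
def IsAugSeq (M1 M2 : FinMatroid α) (S : Finset α) (p : List α) : Prop :=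
  PathTo M1 M2 S p ∧
  ∃ h : p ≠ [], p.getLast h ∉ S ∧ M2.Indep (insert (p.getLast h) S)

/-- `dt` is the `(s,t)`-distance in `G(S)`: the shortest `(s,t)`-walk has
`dt - 1` interior vertices. -/
def IsDistST (M1 M2 : FinMatroid α) (S : Finset α) (dt : ℕ) : Prop :=
  (∃ p : List α, IsAugSeq M1 M2 S p ∧ p.length + 1 = dt) ∧
  (∀ p : List α, IsAugSeq M1 M2 S p → dt ≤ p.length + 1)

/-- An augmenting set `(D 1, …, D (dt-1))` in `G(S)` (CLSSW, Definition 24). -/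
def IsAugmentingSet (M1 M2 : FinMatroid α) (S : Finset α) (dt : ℕ)
    (D : ℕ → Finset α) : Prop :=
  (∀ l, 1 ≤ l → l < dt → ∀ u ∈ D l, InLayer M1 M2 S u l) ∧
  (∀ l l', 1 ≤ l → l < dt → 1 ≤ l' → l' < dt → (D l).card = (D l').card) ∧
  M1.Indep (S ∪ D 1) ∧
  M2.Indep (S ∪ D (dt - 1)) ∧
  (∀ l, 1 ≤ l → l < dt - 1 → Even l → M1.Indep ((S \ D l) ∪ D (l + 1))) ∧
  (∀ l, 1 ≤ l → l < dt - 1 → Odd l → M2.Indep ((S \ D (l + 1)) ∪ D l))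

/-- The union `D 1 ∪ ⋯ ∪ D (dt - 1)` of the layers of an augmenting set. -/
def AugUnion (dt : ℕ) (D : ℕ → Finset α) : Finset α :=
  (Finset.Icc 1 (dt - 1)).biUnion D

/-
Seen from `M₁`, the layers of the augmenting set alternate between elements outside `S` (odd
layers) and inside `S` (even layers), and `M₁` exchanges them in the order `D₁, D₂, D₃, …`:
starting from `S + D₁`, each step removes `D_{2i}` and adds `D_{2i+1}`. A step keeps the set
independent because it does not lower the rank: since the layers are shortest-path layers, no
exchange edge skips a layer, so `D_{2i+1}` is spanned by `P = S - D₂ - ⋯ - D_{2i-2}`; the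
independent set `P - D_{2i} + D_{2i+1}` lies in that span and is as large as `P`, hence spans
`P ⊇ D_{2i}` again. `M₂` runs through the same argument with the layers in reverse order, from
`t` back to `s`.
-/

lemma Finset.biUnion_Icc_add_one (F : ℕ → Finset α) {a b : ℕ} (h : a ≤ b + 1) :
    (Icc a (b + 1)).biUnion F = (Icc a b).biUnion F ∪ F (b + 1) := by
  rw [← insert_Icc_right_eq_Icc_add_one h, biUnion_insert, union_comm]

lemma Finset.symmDiff_union_union {S U A B : Finset α} (hA : A ⊆ S) (hB : Disjoint B S) :
    symmDiff S (U ∪ A ∪ B) = symmDiff S U \ A ∪ B := by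
  ext x
  have := @hA x
  have := fun h : x ∈ B ↦ disjoint_left.1 hB h
  simp only [mem_symmDiff, mem_union, mem_sdiff]
  tauto

lemma Finset.biUnion_Icc_reflect (F : ℕ → Finset α) (n : ℕ) :
    (Icc 1 n).biUnion (fun k ↦ F (n + 1 - k)) = (Icc 1 n).biUnion F := by
  ext x
  simp only [mem_biUnion, mem_Icc]
  constructor <;> rintro ⟨k, hk, hx⟩ <;> refine ⟨n + 1 - k, by omega, ?_⟩
  · exact hx
  · rwa [show n + 1 - (n + 1 - k) = k by omega]

namespace Matroid

variable {β : Type*} {M : Matroid β} {I J Z : Set β} {e : β}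

lemma Indep.mem_closure_of_not_indep_insert (hI : M.Indep I) (he : e ∈ M.E)
    (h : ¬ M.Indep (insert e I)) : e ∈ M.closure I := by
  by_contra hcl
  exact h (hI.insert_indep_iff.2 (Or.inl ⟨he, hcl⟩))

lemma Indep.mem_closure_sdiff_of_forall_mem_closure_sdiff_singleton (hI : M.Indep I)
    (he : e ∈ M.closure I) (hZ : ∀ z ∈ Z, e ∈ M.closure (I \ {z})) :
    e ∈ M.closure (I \ Z) := by
  have hsInter : I \ Z = ⋂₀ insert I ((fun z ↦ I \ {z}) '' Z) := by
    ext x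
    simp only [Set.mem_sdiff, Set.sInter_insert, Set.mem_inter_iff, Set.forall_mem_image,
      Set.mem_sInter, Set.mem_singleton_iff]
    exact ⟨fun ⟨hxI, hxZ⟩ ↦ ⟨hxI, fun z hz ↦ ⟨hxI, fun h ↦ hxZ (h ▸ hz)⟩⟩,
      fun ⟨hxI, h⟩ ↦ ⟨hxI, fun hxZ ↦ (h hxZ).2 rfl⟩⟩
  rw [hsInter, hI.closure_sInter_eq_biInter_closure_of_forall_subset (Set.insert_nonempty _ _)]
  · simpa [he] using hZ
  · rintro J (rfl | ⟨z, -, rfl⟩)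
    exacts [subset_rfl, Set.sdiff_subset]

lemma Indep.closure_eq_of_subset_closure_of_encard_le (hJ : M.Indep J) (hJfin : J.Finite)
    (hJI : J ⊆ M.closure I) (hcard : I.encard ≤ J.encard) : M.closure J = M.closure I := by
  rw [← M.closure_closure I]
  refine (M.isRkFinite_of_finite hJfin).closure_eq_closure_of_subset_of_eRk_ge_eRk hJI ?_
  rw [eRk_closure_eq, hJ.eRk_eq_encard]
  exact (M.eRk_le_encard I).trans hcard

lemma Indep.indep_of_subset_closure_of_encard_le (hI : M.Indep I) (hJfin : J.Finite)
    (hIJ : I ⊆ M.closure J) (hcard : J.encard ≤ I.encard) : M.Indep J := by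
  refine (M.isRkFinite_of_finite hJfin).indep_of_encard_le_eRk ?_
  calc J.encard ≤ I.encard := hcard
    _ = M.eRk I := hI.eRk_eq_encard.symm
    _ ≤ M.eRk (M.closure J) := M.eRk_mono hIJ
    _ = M.eRk J := M.eRk_closure_eq J

end Matroid

/-- An augmenting set as one matroid sees it, with the layers renumbered `F 1, …, F (2m+1)` in
the order in which that matroid exchanges them. The `not_indep_*` fields say that the layers are
shortest-path layers: no exchange edge enters a layer beyond the first from the source, and
none skips a layer. -/
structure Matroid.IsAugmentingLayers (M : Matroid α) (S : Finset α) (m : ℕ)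
    (F : ℕ → Finset α) : Prop where
  mem_iff_even : ∀ k ∈ Icc 1 (2 * m + 1), ∀ x ∈ F k, x ∈ S ↔ Even k
  eq_of_mem : ∀ k ∈ Icc 1 (2 * m + 1), ∀ l ∈ Icc 1 (2 * m + 1), ∀ x ∈ F k, x ∈ F l → k = l
  card_eq : ∀ i < m, (F (2 * i + 2)).card = (F (2 * i + 3)).card
  indep_first : M.Indep ↑(S ∪ F 1)
  indep_exchange : ∀ i < m, M.Indep ↑(S \ F (2 * i + 2) ∪ F (2 * i + 3))
  not_indep_insert : ∀ k ∈ Icc 2 (2 * m + 1), ∀ v ∈ F k, v ∉ S → ¬ M.Indep ↑(insert v S)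
  not_indep_exchange : ∀ k ∈ Icc 1 (2 * m + 1), ∀ l ≤ 2 * m + 1, k + 1 < l →
    ∀ u ∈ F k, ∀ v ∈ F l, u ∈ S → v ∉ S → ¬ M.Indep ↑(insert v (S.erase u))

namespace Matroid.IsAugmentingLayers

variable {M : Matroid α} {S : Finset α} {m : ℕ} {F : ℕ → Finset α}

lemma indep (h : IsAugmentingLayers M S m F) : M.Indep ↑S :=
  h.indep_first.subset (by simp)

lemma subset_of_even (h : IsAugmentingLayers M S m F) {k : ℕ} (hk : k ∈ Icc 1 (2 * m + 1))
    (he : Even k) : F k ⊆ S :=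
  fun x hx ↦ (h.mem_iff_even k hk x hx).2 he

lemma disjoint_of_odd (h : IsAugmentingLayers M S m F) {k : ℕ} (hk : k ∈ Icc 1 (2 * m + 1))
    (ho : Odd k) : Disjoint (F k) S :=
  disjoint_left.2 fun x hx hxS ↦ Nat.not_even_iff_odd.2 ho ((h.mem_iff_even k hk x hx).1 hxS)

lemma disjoint_biUnion (h : IsAugmentingLayers M S m F) {j k : ℕ} (hjk : j < k)
    (hk : k ∈ Icc 1 (2 * m + 1)) : Disjoint (F k) ((Icc 1 j).biUnion F) := by
  simp only [disjoint_left, mem_biUnion, mem_Icc, not_exists, not_and]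
  intro x hxk l hl hxl
  have := h.eq_of_mem k hk l (mem_Icc.2 ⟨hl.1, by have := (mem_Icc.1 hk).2; omega⟩) x hxk hxl
  omega

lemma subset_closure (h : IsAugmentingLayers M S m F) {i : ℕ} (hi : i < m) :
    ↑(F (2 * i + 2)) ⊆ M.closure ↑(S \ (Icc 1 (2 * i + 2)).biUnion F ∪ F (2 * i + 3)) := by
  set P := S \ (Icc 1 (2 * i + 1)).biUnion F
  set B := S \ (Icc 1 (2 * i + 2)).biUnion F ∪ F (2 * i + 3)
  have hk2 : 2 * i + 2 ∈ Icc 1 (2 * m + 1) := mem_Icc.2 ⟨by omega, by omega⟩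
  have hk3 : 2 * i + 3 ∈ Icc 1 (2 * m + 1) := mem_Icc.2 ⟨by omega, by omega⟩
  have hSP : S \ (Icc 1 (2 * i + 2)).biUnion F = P \ F (2 * i + 2) := by
    rw [biUnion_Icc_add_one F (by omega), sdiff_sdiff_left]
    rfl
  have hFP : F (2 * i + 2) ⊆ P := subset_sdiff.2
    ⟨h.subset_of_even hk2 (by simp [parity_simps]), h.disjoint_biUnion (by omega) hk2⟩
  have hB : M.Indep ↑B := (h.indep_exchange i hi).subset <| coe_subset.2 <| union_subset_union
    (sdiff_subset_sdiff subset_rfl (subset_biUnion_of_mem F (mem_Icc.2 ⟨by omega, le_rfl⟩)))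
    subset_rfl
  have hP : M.Indep ↑P := h.indep.subset (coe_subset.2 sdiff_subset)
  have hBP : ↑B ⊆ M.closure ↑P := by
    rw [coe_union]
    refine Set.union_subset ?_ fun v hv ↦ ?_
    · exact (coe_subset.2 (hSP ▸ sdiff_subset)).trans (M.subset_closure _ hP.subset_ground)
    have hvS : v ∉ S := disjoint_left.1 (h.disjoint_of_odd hk3 ⟨i + 1, by ring⟩) hv
    have hvE : v ∈ M.E := hB.subset_ground (by simp [B, hv])
    rw [show (P : Set α) = ↑S \ ↑(S ∩ (Icc 1 (2 * i + 1)).biUnion F) by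
      rw [← coe_sdiff, sdiff_inter_self_left]]
    refine h.indep.mem_closure_sdiff_of_forall_mem_closure_sdiff_singleton
      (h.indep.mem_closure_of_not_indep_insert hvE ?_) fun z hz ↦ ?_
    · simpa using h.not_indep_insert _ (mem_Icc.2 ⟨by omega, by omega⟩) v hv hvS
    simp only [coe_inter, Set.mem_inter_iff, mem_coe, mem_biUnion, mem_Icc] at hz
    obtain ⟨hzS, l, hl, hzl⟩ := hz
    rw [← coe_erase]
    refine (h.indep.subset (coe_subset.2 (erase_subset _ _))).mem_closure_of_not_indep_insert
      hvE ?_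
    simpa using h.not_indep_exchange l (mem_Icc.2 ⟨hl.1, by omega⟩) (2 * i + 3) (by omega)
      (by omega) z hzl v hv hzS hvS
  have hcard : (P : Set α).encard ≤ (B : Set α).encard := by
    have hdisj : Disjoint (S \ (Icc 1 (2 * i + 2)).biUnion F) (F (2 * i + 3)) :=
      (h.disjoint_of_odd hk3 ⟨i + 1, by ring⟩).symm.mono_left sdiff_subset
    rw [Set.encard_coe_eq_coe_finsetCard, Set.encard_coe_eq_coe_finsetCard, Nat.cast_le,
      card_union_of_disjoint hdisj, hSP, ← h.card_eq i hi, card_sdiff_add_card_eq_card hFP]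
  calc (F (2 * i + 2) : Set α) ⊆ P := coe_subset.2 hFP
    _ ⊆ M.closure ↑P := M.subset_closure _ hP.subset_ground
    _ = M.closure ↑B := (hB.closure_eq_of_subset_closure_of_encard_le B.finite_toSet hBP hcard).symm

theorem indep_symmDiff (h : IsAugmentingLayers M S m F) :
    M.Indep ↑(symmDiff S ((Icc 1 (2 * m + 1)).biUnion F)) := by
  suffices ∀ j ≤ m, M.Indep ↑(symmDiff S ((Icc 1 (2 * j + 1)).biUnion F)) from this m le_rfl
  intro j hj
  induction j with
  | zero =>
    have hF1 : Disjoint S (F 1) := (h.disjoint_of_odd (by simp) odd_one).symm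
    simpa [hF1.symmDiff_eq_sup] using h.indep_first
  | succ j ih =>
    have hX := ih (by omega)
    set X := symmDiff S ((Icc 1 (2 * j + 1)).biUnion F)
    have hk2 : 2 * j + 2 ∈ Icc 1 (2 * m + 1) := mem_Icc.2 ⟨by omega, by omega⟩
    have hk3 : 2 * j + 3 ∈ Icc 1 (2 * m + 1) := mem_Icc.2 ⟨by omega, by omega⟩
    have hAS : F (2 * j + 2) ⊆ S := h.subset_of_even hk2 (by simp [parity_simps])
    have hAX : F (2 * j + 2) ⊆ X := fun x hx ↦ mem_symmDiff.2
      (Or.inl ⟨hAS hx, disjoint_left.1 (h.disjoint_biUnion (by omega) hk2) hx⟩)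
    have hU : (Icc 1 (2 * j + 2)).biUnion F = (Icc 1 (2 * j + 1)).biUnion F ∪ F (2 * j + 2) :=
      biUnion_Icc_add_one F (by omega)
    have hsucc : symmDiff S ((Icc 1 (2 * (j + 1) + 1)).biUnion F) =
        X \ F (2 * j + 2) ∪ F (2 * j + 3) := by
      rw [show 2 * (j + 1) + 1 = 2 * j + 2 + 1 by ring, biUnion_Icc_add_one F (by omega), hU]
      exact symmDiff_union_union hAS (h.disjoint_of_odd hk3 ⟨j + 1, by ring⟩)
    have hsub : S \ (Icc 1 (2 * j + 2)).biUnion F ∪ F (2 * j + 3) ⊆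
        X \ F (2 * j + 2) ∪ F (2 * j + 3) := by
      refine union_subset_union (fun x hx ↦ ?_) subset_rfl
      simp only [hU, X, mem_sdiff, mem_union, mem_symmDiff] at hx ⊢
      tauto
    rw [hsucc]
    refine hX.indep_of_subset_closure_of_encard_le (finite_toSet _) (fun x hx ↦ ?_) ?_
    · by_cases hxA : x ∈ F (2 * j + 2)
      · exact M.closure_subset_closure (coe_subset.2 hsub) (h.subset_closure (by omega) hxA)
      · exact M.mem_closure_of_mem' (by simp_all) (hX.subset_ground hx)
    · rw [Set.encard_coe_eq_coe_finsetCard, Set.encard_coe_eq_coe_finsetCard, Nat.cast_le]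
      have := card_union_le (X \ F (2 * j + 2)) (F (2 * j + 3))
      have := card_sdiff_of_subset hAX
      have := card_le_card hAX
      have := h.card_eq j (by omega)
      omega

end Matroid.IsAugmentingLayers

def FinMatroid.toMatroid (M : FinMatroid α) : Matroid α :=
  (IndepMatroid.ofFinset ↑M.E M.Indep M.indep_empty (fun _ _ hJ hIJ ↦ M.indep_mono hJ hIJ)
    M.indep_exchange (fun _ hI ↦ coe_subset.2 (M.indep_subset_ground hI))).matroid

lemma FinMatroid.toMatroid_indep_coe (M : FinMatroid α) {I : Finset α} :
    M.toMatroid.Indep ↑I ↔ M.Indep I := by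
  simp [FinMatroid.toMatroid]

section ExchangeGraph

variable {M1 M2 : FinMatroid α} {S : Finset α} {p : List α} {u v : α} {k l dt m : ℕ}

lemma ExchangeEdge.mem_iff_notMem (h : ExchangeEdge M1 M2 S u v) : v ∈ S ↔ u ∉ S := by
  rcases h with ⟨hu, hv, -⟩ | ⟨hu, hv, -⟩ <;> simp [hu, hv]

lemma getLast_mem_iff_of_isChain (hp : p ≠ []) (hch : p.IsChain (ExchangeEdge M1 M2 S)) :
    p.getLast hp ∈ S ↔ (p.head hp ∈ S ↔ Odd p.length) := by
  induction p with
  | nil => contradiction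
  | cons a q ih =>
    cases q with
    | nil => simp
    | cons b r =>
      obtain ⟨hab, hch⟩ := List.isChain_cons_cons.1 hch
      rw [List.getLast_cons_cons, ih (List.cons_ne_nil b r) hch, List.head_cons,
        hab.mem_iff_notMem]
      simp only [List.head_cons, List.length_cons, Nat.odd_add_one]
      tauto

lemma PathTo.mem_iff_even (hp : PathTo M1 M2 S p) (hu : p.getLast? = some u) :
    u ∈ S ↔ Even p.length := by
  obtain ⟨hne, hhead, -, hch⟩ := hp
  rw [List.getLast?_eq_some_getLast hne, Option.some_inj] at hu
  rw [← hu, getLast_mem_iff_of_isChain hne hch]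
  simp [hhead]

lemma InLayer.eq (hk : InLayer M1 M2 S u k) (hl : InLayer M1 M2 S u l) : k = l := by
  obtain ⟨⟨p, hp, hpu, rfl⟩, hpmin⟩ := hk
  obtain ⟨⟨q, hq, hqu, rfl⟩, hqmin⟩ := hl
  exact le_antisymm (hpmin q hq hqu) (hqmin p hp hpu)

lemma InLayer.mem_iff_even (h : InLayer M1 M2 S u l) : u ∈ S ↔ Even l := by
  obtain ⟨⟨p, hp, hpu, rfl⟩, -⟩ := h
  exact hp.mem_iff_even hpu

lemma InLayer.le_one_of_indep_insert (h : InLayer M1 M2 S v l) (hv : v ∉ S)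
    (hind : M1.Indep (insert v S)) : l ≤ 1 :=
  h.2 [v] ⟨List.cons_ne_nil v [], hv, hind, List.isChain_singleton v⟩ rfl

lemma InLayer.le_add_one_of_exchangeEdge (hu : InLayer M1 M2 S u k) (hv : InLayer M1 M2 S v l)
    (he : ExchangeEdge M1 M2 S u v) : l ≤ k + 1 := by
  obtain ⟨⟨p, ⟨hne, hhead, hind, hch⟩, hpu, rfl⟩, -⟩ := hu
  have hpath : PathTo M1 M2 S (p ++ [v]) := by
    refine ⟨by simp, ?_, ?_, List.isChain_append.2 ⟨hch, List.isChain_singleton v, ?_⟩⟩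
    · rwa [List.head_append_of_ne_nil hne]
    · rwa [List.head_append_of_ne_nil hne]
    · intro x hx y hy
      simp_all
  simpa using hv.2 _ hpath (by simp)

lemma IsDistST.le_add_one (hdt : IsDistST M1 M2 S dt) (hv : InLayer M1 M2 S v l) (hvS : v ∉ S)
    (hind : M2.Indep (insert v S)) : dt ≤ l + 1 := by
  obtain ⟨⟨p, hp, hpv, rfl⟩, -⟩ := hv
  obtain ⟨hne, -⟩ := id hp
  rw [List.getLast?_eq_some_getLast hne, Option.some_inj] at hpv
  exact hdt.2 p ⟨hp, hne, hpv ▸ hvS, hpv ▸ hind⟩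

lemma IsDistST.exists_eq_two_mul_add_two (hdt : IsDistST M1 M2 S dt) : ∃ m, dt = 2 * m + 2 := by
  obtain ⟨⟨p, ⟨hp, hne, hlast, -⟩, rfl⟩, -⟩ := hdt
  obtain ⟨r, hr⟩ := Nat.not_even_iff_odd.1
    (mt (hp.mem_iff_even (List.getLast?_eq_some_getLast hne)).2 hlast)
  exact ⟨r, by omega⟩

lemma IsAugmentingSet.isAugmentingLayers_fst {D : ℕ → Finset α}
    (hD : IsAugmentingSet M1 M2 S (2 * m + 2) D) : M1.toMatroid.IsAugmentingLayers S m D := by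
  obtain ⟨hlayer, hcard, hbase, -, heven, -⟩ := hD
  have hL : ∀ k ∈ Icc 1 (2 * m + 1), ∀ x ∈ D k, InLayer M1 M2 S x k := fun k hk ↦
    hlayer k (mem_Icc.1 hk).1 (by have := (mem_Icc.1 hk).2; omega)
  refine ⟨fun k hk x hx ↦ (hL k hk x hx).mem_iff_even,
    fun k hk l hl x hxk hxl ↦ (hL k hk x hxk).eq (hL l hl x hxl),
    fun i hi ↦ hcard _ _ (by omega) (by omega) (by omega) (by omega),
    M1.toMatroid_indep_coe.2 hbase,
    fun i hi ↦ M1.toMatroid_indep_coe.2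
      (heven (2 * i + 2) (by omega) (by omega) (by simp [parity_simps])),
    fun k hk v hv hvS hind ↦ ?_, fun k hk l hl hkl u hu v hv huS hvS hind ↦ ?_⟩
  · have := (hL k (mem_Icc.2 ⟨by grind, by grind⟩) v hv).le_one_of_indep_insert hvS
      (M1.toMatroid_indep_coe.1 hind)
    grind
  · have := (hL k hk u hu).le_add_one_of_exchangeEdge (hL l (mem_Icc.2 ⟨by omega, hl⟩) v hv)
      (Or.inl ⟨huS, hvS, M1.toMatroid_indep_coe.1 hind⟩)
    omega

lemma IsAugmentingSet.isAugmentingLayers_snd {D : ℕ → Finset α}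
    (hdt : IsDistST M1 M2 S (2 * m + 2)) (hD : IsAugmentingSet M1 M2 S (2 * m + 2) D) :
    M2.toMatroid.IsAugmentingLayers S m (fun k ↦ D (2 * m + 2 - k)) := by
  obtain ⟨hlayer, hcard, -, hbase, -, hodd⟩ := hD
  have hL : ∀ k ∈ Icc 1 (2 * m + 1), ∀ x ∈ D (2 * m + 2 - k),
      InLayer M1 M2 S x (2 * m + 2 - k) := fun k hk ↦ hlayer _ (by grind) (by grind)
  refine ⟨fun k hk x hx ↦ ?_, fun k hk l hl x hxk hxl ↦ ?_,
    fun i hi ↦ hcard _ _ (by omega) (by omega) (by omega) (by omega),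
    M2.toMatroid_indep_coe.2 hbase,
    fun i hi ↦ ?_, fun k hk v hv hvS hind ↦ ?_, fun k hk l hl hkl u hu v hv huS hvS hind ↦ ?_⟩
  · rw [(hL k hk x hx).mem_iff_even, Nat.even_sub (by grind)]
    simp [parity_simps]
  · have := (hL k hk x hxk).eq (hL l hl x hxl)
    grind
  · have := hodd (2 * m - 2 * i - 1) (by omega) (by omega) ⟨m - i - 1, by omega⟩
    rw [show 2 * m - 2 * i - 1 + 1 = 2 * m + 2 - (2 * i + 2) by omega,
      show 2 * m - 2 * i - 1 = 2 * m + 2 - (2 * i + 3) by omega] at this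
    exact M2.toMatroid_indep_coe.2 this
  · have := hdt.le_add_one (hL k (mem_Icc.2 ⟨by grind, by grind⟩) v hv) hvS
      (M2.toMatroid_indep_coe.1 hind)
    grind
  · have := (hL l (mem_Icc.2 ⟨by omega, hl⟩) v hv).le_add_one_of_exchangeEdge (hL k hk u hu)
      (Or.inr ⟨hvS, huS, M2.toMatroid_indep_coe.1 hind⟩)
    grind

end ExchangeGraph

theorem aug_set_independent_general (M1 M2 : FinMatroid α)
    (S : Finset α)
    (dt : ℕ) (hdt : IsDistST M1 M2 S dt)
    (D : ℕ → Finset α) (hD : IsAugmentingSet M1 M2 S dt D) :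
    M1.Indep (symmDiff S (AugUnion dt D)) ∧
      M2.Indep (symmDiff S (AugUnion dt D)) := by
  obtain ⟨m, rfl⟩ := hdt.exists_eq_two_mul_add_two
  have hU : AugUnion (2 * m + 2) D = (Icc 1 (2 * m + 1)).biUnion D := rfl
  rw [← M1.toMatroid_indep_coe, ← M2.toMatroid_indep_coe, hU]
  refine ⟨hD.isAugmentingLayers_fst.indep_symmDiff, ?_⟩
  rw [← biUnion_Icc_reflect]
  exact (hD.isAugmentingLayers_snd hdt).indep_symmDiff

/-- Augmenting along an augmenting set yields a common independent set
(CLSSW, Theorem 25). -/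
theorem aug_set_independent (M1 M2 : FinMatroid α) (hE : M1.E = M2.E)
    (S : Finset α) (hS1 : M1.Indep S) (hS2 : M2.Indep S)
    (dt : ℕ) (hdt : IsDistST M1 M2 S dt)
    (D : ℕ → Finset α) (hD : IsAugmentingSet M1 M2 S dt D) :
    M1.Indep (symmDiff S (AugUnion dt D)) ∧
      M2.Indep (symmDiff S (AugUnion dt D)) :=
  aug_set_independent_general M1 M2 S dt hdt D hD
end
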